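/- arXiv:hep-th/9306138 — 7 statements merged into one kernel-verified Lean document; each statement's English description precedes it below -/
import Mathlib

section
/- Let A be an ℕ-filtered associative algebra with no zero divisors such that dim A^{(i)} is asymptotically equivalent to a_0 i^k for some a_0 > 0 and k ∈ ℕ as i → ∞ (polynomial growth). Then A is an Ore domain: any two nonzero elements of A have a common nonzero right multiple and a common nonzero left multiple. -/
/-!
Take `d` with `a, b ∈ A^{(d)}`. Multiplication by a nonzero element is injective, so `a A^{(n)}`
and `b A^{(n)}` are two copies of `A^{(n)}` inside `A^{(n+d)}`; if they met only in `0`, then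
`dim A^{(n+d)} ≥ 2 dim A^{(n)}`. Polynomial growth forces `dim A^{(n+d)} / dim A^{(n)} → 1`, so for
some `n` they meet in a nonzero common right multiple. Multiplying on the right instead gives
common left multiples.
-/

open Filter Asymptotics Topology Module

theorem isEquivalent_const_mul_natCast_add_pow (c : ℝ) (d k : ℕ) :
    (fun n : ℕ => c * ((n + d : ℕ) : ℝ) ^ k) ~[atTop] fun n => c * (n : ℝ) ^ k := by
  have h : (fun n : ℕ => ((n + d : ℕ) : ℝ)) ~[atTop] fun n => (n : ℝ) := by
    refine (isEquivalent_of_tendsto_one ?_).symm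
    simpa [Pi.div_def] using tendsto_natCast_div_add_atTop (d : ℝ)
  exact (IsEquivalent.refl (u := fun _ => c)).mul (h.pow k)

theorem exists_lt_two_mul_of_tendsto_div_pow {f : ℕ → ℕ} {c : ℝ} {k : ℕ}
    (h : Tendsto (fun n : ℕ => (f n : ℝ) / (c * (n : ℝ) ^ k)) atTop (𝓝 1)) (d : ℕ) :
    ∃ n, f (n + d) < 2 * f n := by
  have hf : (fun n => (f n : ℝ)) ~[atTop] fun n => c * (n : ℝ) ^ k :=
    isEquivalent_of_tendsto_one h
  have hshift : (fun n => (f (n + d) : ℝ)) ~[atTop] fun n => (f n : ℝ) :=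
    (hf.comp_tendsto (tendsto_add_atTop_nat d)).trans
      ((isEquivalent_const_mul_natCast_add_pow c d k).trans hf.symm)
  have hne : ∀ᶠ n in atTop, (f n : ℝ) ≠ 0 :=
    (h.eventually_ne one_ne_zero).mono fun n hn h0 => hn (by simp [h0])
  have hratio := (isEquivalent_iff_tendsto_one hne).1 hshift
  by_contra! hdouble
  have h2 : ∀ᶠ n in atTop, (2 : ℝ) ≤ (f (n + d) : ℝ) / f n := by
    filter_upwards [hne] with n hn
    rw [le_div_iff₀ (lt_of_le_of_ne (Nat.cast_nonneg _) hn.symm)]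
    exact_mod_cast hdouble n
  linarith [ge_of_tendsto hratio h2]

theorem Submodule.inf_ne_bot_of_finrank_lt {K V : Type*} [DivisionRing K] [AddCommGroup V]
    [Module K V] {P Q W : Submodule K V} [FiniteDimensional K W] (hP : P ≤ W) (hQ : Q ≤ W)
    (h : finrank K W < finrank K P + finrank K Q) : P ⊓ Q ≠ ⊥ := by
  have := Submodule.finiteDimensional_of_le hP
  have := Submodule.finiteDimensional_of_le hQ
  intro hPQ
  have hsum := Submodule.finrank_sup_add_finrank_inf_eq P Q
  rw [hPQ, finrank_bot, add_zero] at hsum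
  exact (Submodule.finrank_mono (sup_le hP hQ)).not_gt (hsum ▸ h)

theorem exists_map_eq_map_ne_zero_of_finrank_lt {K V : Type*} [DivisionRing K] [AddCommGroup V]
    [Module K V] {U W : Submodule K V} [FiniteDimensional K W] {φ ψ : V →ₗ[K] V}
    (hφ : Function.Injective φ) (hψ : Function.Injective ψ)
    (hφU : U.map φ ≤ W) (hψU : U.map ψ ≤ W) (h : finrank K W < 2 * finrank K U) :
    ∃ u v, φ u = ψ v ∧ φ u ≠ 0 := by
  rw [two_mul] at h
  nth_rw 1 [(Submodule.equivMapOfInjective φ hφ U).finrank_eq] at h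
  rw [(Submodule.equivMapOfInjective ψ hψ U).finrank_eq] at h
  obtain ⟨z, ⟨⟨u, -, rfl⟩, ⟨v, -, hv⟩⟩, hz⟩ :=
    Submodule.exists_mem_ne_zero_of_ne_bot (Submodule.inf_ne_bot_of_finrank_lt hφU hψU h)
  exact ⟨u, v, hv.symm, hz⟩

theorem polynomial_growth_implies_Ore_general
    (A : Type*) [Ring A] [Algebra ℂ A]
    (hnzd : ∀ x y : A, x * y = 0 → x = 0 ∨ y = 0)
    -- the filtration
    (F : ℕ → Submodule ℂ A)
    (hmono : ∀ i, F i ≤ F (i + 1))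
    (hmul : ∀ i j, ∀ x ∈ F i, ∀ y ∈ F j, x * y ∈ F (i + j))
    (hexh : ∀ a : A, ∃ i, a ∈ F i)
    (hfin : ∀ i, FiniteDimensional ℂ (F i))
    -- polynomial growth: dim A^{(i)} ~ a₀ i^k as i → ∞
    (a₀ : ℝ) (k : ℕ)
    (hgrowth : Tendsto (fun i : ℕ =>
      (Module.finrank ℂ (F i) : ℝ) / (a₀ * (i : ℝ) ^ k)) atTop (nhds 1)) :
    ∀ a b : A, a ≠ 0 → b ≠ 0 →
      (∃ u v : A, a * u = b * v ∧ a * u ≠ 0) ∧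
      (∃ u v : A, u * a = v * b ∧ u * a ≠ 0) := by
  intro a b ha hb
  have : NoZeroDivisors A := ⟨hnzd _ _⟩
  obtain ⟨d, haF, hbF⟩ : ∃ d, a ∈ F d ∧ b ∈ F d := by
    obtain ⟨i, hi⟩ := hexh a
    obtain ⟨j, hj⟩ := hexh b
    have hF : Monotone F := monotone_nat_of_le_succ hmono
    exact ⟨max i j, hF (le_max_left i j) hi, hF (le_max_right i j) hj⟩
  obtain ⟨n, hn⟩ := exists_lt_two_mul_of_tendsto_div_pow hgrowth d
  have hleft : ∀ c ∈ F d, (F n).map (LinearMap.mulLeft ℂ c) ≤ F (n + d) := by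
    rintro c hc _ ⟨x, hx, rfl⟩
    exact add_comm d n ▸ hmul d n c hc x hx
  have hright : ∀ c ∈ F d, (F n).map (LinearMap.mulRight ℂ c) ≤ F (n + d) := by
    rintro c hc _ ⟨x, hx, rfl⟩
    exact hmul n d x hx c hc
  have := hfin (n + d)
  exact ⟨exists_map_eq_map_ne_zero_of_finrank_lt (mul_right_injective₀ ha)
      (mul_right_injective₀ hb) (hleft a haF) (hleft b hbF) hn,
    exists_map_eq_map_ne_zero_of_finrank_lt (mul_left_injective₀ ha)
      (mul_left_injective₀ hb) (hright a haF) (hright b hbF) hn⟩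

/-- An ℕ-filtered associative algebra with no zero divisors whose filtration has
polynomial growth (`dim A^{(i)} ~ a₀ i^k`) is an Ore domain: any two nonzero elements have a
common nonzero right multiple and a common nonzero left multiple. -/
theorem polynomial_growth_implies_Ore
    (A : Type*) [Ring A] [Algebra ℂ A]
    (hnzd : ∀ x y : A, x * y = 0 → x = 0 ∨ y = 0)
    -- the filtration
    (F : ℕ → Submodule ℂ A)
    (hmono : ∀ i, F i ≤ F (i + 1))
    (hmul : ∀ i j, ∀ x ∈ F i, ∀ y ∈ F j, x * y ∈ F (i + j))
    (hexh : ∀ a : A, ∃ i, a ∈ F i)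
    (hfin : ∀ i, FiniteDimensional ℂ (F i))
    -- polynomial growth: dim A^{(i)} ~ a₀ i^k as i → ∞
    (a₀ : ℝ) (ha₀ : 0 < a₀) (k : ℕ)
    (hgrowth : Tendsto (fun i : ℕ =>
      (Module.finrank ℂ (F i) : ℝ) / (a₀ * (i : ℝ) ^ k)) atTop (nhds 1)) :
    ∀ a b : A, a ≠ 0 → b ≠ 0 →
      (∃ u v : A, a * u = b * v ∧ a * u ≠ 0) ∧
      (∃ u v : A, u * a = v * b ∧ u * a ≠ 0) :=
  polynomial_growth_implies_Ore_general A hnzd F hmono hmul hexh hfin a₀ k hgrowth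
end

section
/- In the algebra of formal power series in a commuting variable z over ℂ, for any a ∈ ℂ and q with |q| < 1 interpreted formally (i.e., as an identity of formal power series in z): Σ_{i=0}^{∞} ((a)_i / (q²)_i) z^i = (az)_∞ / (z)_∞, where (a)_i = (1−a)(1−aq²)⋯(1−aq^{2(i−1)}) and (a)_∞ = ∏_{i≥0}(1 − a q^{2i}), valid whenever the q-shifted factorials and products converge (e.g., as formal power series in z with coefficients rational in q and a, or for |q| < 1, |z| < 1). -/
/-!
Write `F(w) = ∑ cᵢ wⁱ` with `cᵢ = (a)ᵢ/(p)ᵢ` in base `p = q²`, where `(x)ᵢ = ∏_{k<i} (1 - x pᵏ)`.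
The coefficient recurrence `cᵢ₊₁ (1 - pⁱ⁺¹) = cᵢ (1 - a pⁱ)` is the q-difference equation
`(1 - w) F(w) = (1 - a w) F(p w)`; iterating it gives `F(z) (z)ₙ = (a z)ₙ F(pⁿ z)`. The coefficients
converge to `(a)_∞/(p)_∞`, so they are bounded and `F(pⁿ z) → F(0) = 1`; letting `n → ∞` gives
`F(z) (z)_∞ = (a z)_∞`, and `(z)_∞ ≠ 0` since no factor vanishes.
-/

open Finset Filter Topology

section PowerSeries

variable {c : ℕ → ℂ} {M : ℝ}

lemma summable_mul_pow_of_norm_le (hc : ∀ i, ‖c i‖ ≤ M) {w : ℂ} (hw : ‖w‖ < 1) :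
    Summable fun i => c i * w ^ i :=
  .of_norm_bounded ((summable_geometric_of_lt_one (norm_nonneg w) hw).mul_left M) fun i => by
    rw [norm_mul, norm_pow]
    exact mul_le_mul_of_nonneg_right (hc i) (by positivity)

lemma tendsto_tsum_mul_pow_of_tendsto_zero {α : Type*} {l : Filter α} {w : α → ℂ}
    (hc : ∀ i, ‖c i‖ ≤ M) (hw : Tendsto w l (𝓝 0)) :
    Tendsto (fun x => ∑' i, c i * w x ^ i) l (𝓝 (c 0)) := by
  have hlim (i : ℕ) : Tendsto (fun x => c i * w x ^ i) l (𝓝 (c i * 0 ^ i)) :=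
    (hw.pow i).const_mul (c i)
  have hbound : ∀ᶠ x in l, ∀ i, ‖c i * w x ^ i‖ ≤ M * (1 / 2 : ℝ) ^ i := by
    have hsmall : ∀ᶠ x in l, ‖w x‖ ≤ 1 / 2 := by
      simpa using hw.norm.eventually (ge_mem_nhds (by norm_num : ‖(0 : ℂ)‖ < 1 / 2))
    filter_upwards [hsmall] with x hx i
    rw [norm_mul, norm_pow]
    exact mul_le_mul (hc i) (pow_le_pow_left₀ (norm_nonneg _) hx i) (by positivity)
      ((norm_nonneg _).trans (hc i))
  have := tendsto_tsum_of_dominated_convergence (summable_geometric_two.mul_left M) hlim hbound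
  rwa [tsum_eq_single 0 fun i hi => by simp [hi], pow_zero, mul_one] at this

lemma HasSum.one_sub_mul_mul_pow {s : ℂ} {w : ℂ} (hs : HasSum (fun i => c i * w ^ i) s) (b : ℂ) :
    HasSum (fun i => (c (i + 1) - b * c i) * w ^ (i + 1)) ((1 - b * w) * s - c 0) := by
  have htail : HasSum (fun i => c (i + 1) * w ^ (i + 1)) (s - c 0) := by
    simpa using (hasSum_nat_add_iff' 1).2 hs
  rw [show (1 - b * w) * s - c 0 = s - c 0 - b * w * s by ring]
  exact (htail.sub (hs.mul_left (b * w))).congr_fun fun i => by ring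

end PowerSeries

namespace QBinomial

noncomputable def qPochhammer (a p : ℂ) (n : ℕ) : ℂ := ∏ k ∈ range n, (1 - a * p ^ k)

noncomputable def coeff (p a : ℂ) (i : ℕ) : ℂ := qPochhammer a p i / qPochhammer p p i

noncomputable def series (p a w : ℂ) : ℂ := ∑' i, coeff p a i * w ^ i

variable {p : ℂ}

lemma qPochhammer_succ (a : ℂ) (n : ℕ) :
    qPochhammer a p (n + 1) = qPochhammer a p n * (1 - a * p ^ n) :=
  prod_range_succ _ _

lemma norm_mul_pow_le (hp : ‖p‖ < 1) (w : ℂ) (k : ℕ) : ‖w * p ^ k‖ ≤ ‖w‖ := by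
  rw [norm_mul, norm_pow]
  exact mul_le_of_le_one_right (norm_nonneg w) (pow_le_one₀ (norm_nonneg p) hp.le)

lemma one_sub_mul_pow_ne_zero (hp : ‖p‖ < 1) {w : ℂ} (hw : ‖w‖ < 1) (k : ℕ) :
    1 - w * p ^ k ≠ 0 := by
  intro h
  have h1 : w * p ^ k = 1 := (sub_eq_zero.mp h).symm
  simpa [h1] using (norm_mul_pow_le hp w k).trans_lt hw

lemma qPochhammer_ne_zero (hp : ‖p‖ < 1) {w : ℂ} (hw : ‖w‖ < 1) (n : ℕ) :
    qPochhammer w p n ≠ 0 :=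
  prod_ne_zero_iff.2 fun k _ => one_sub_mul_pow_ne_zero hp hw k

lemma summable_norm_neg_mul_pow (hp : ‖p‖ < 1) (w : ℂ) :
    Summable fun k : ℕ => ‖-(w * p ^ k)‖ := by
  simpa [norm_mul, norm_pow] using
    (summable_geometric_of_lt_one (norm_nonneg p) hp).mul_left ‖w‖

lemma multipliable_one_sub_mul_pow (hp : ‖p‖ < 1) (w : ℂ) :
    Multipliable fun k : ℕ => 1 - w * p ^ k := by
  simpa [sub_eq_add_neg] using multipliable_one_add_of_summable (summable_norm_neg_mul_pow hp w)

lemma tprod_one_sub_mul_pow_ne_zero (hp : ‖p‖ < 1) {w : ℂ} (hw : ‖w‖ < 1) :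
    ∏' k : ℕ, (1 - w * p ^ k) ≠ 0 := by
  simpa [sub_eq_add_neg] using tprod_one_add_ne_zero_of_summable
    (by simpa [sub_eq_add_neg] using one_sub_mul_pow_ne_zero hp hw) (summable_norm_neg_mul_pow hp w)

lemma tendsto_qPochhammer (hp : ‖p‖ < 1) (a : ℂ) :
    Tendsto (qPochhammer a p) atTop (𝓝 (∏' k : ℕ, (1 - a * p ^ k))) :=
  (multipliable_one_sub_mul_pow hp a).hasProd.tendsto_prod_nat

lemma coeff_zero (a : ℂ) : coeff p a 0 = 1 := by
  simp [coeff, qPochhammer]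

lemma coeff_succ_mul (hp : ‖p‖ < 1) (a : ℂ) (i : ℕ) :
    coeff p a (i + 1) * (1 - p ^ (i + 1)) = coeff p a i * (1 - a * p ^ i) := by
  have hD := qPochhammer_ne_zero hp hp i
  have hDi : 1 - p ^ (i + 1) ≠ 0 := by
    rw [pow_succ']
    exact one_sub_mul_pow_ne_zero hp hp i
  rw [coeff, coeff, qPochhammer_succ, qPochhammer_succ, ← pow_succ']
  field_simp

lemma exists_norm_coeff_le (hp : ‖p‖ < 1) (a : ℂ) : ∃ M, ∀ i, ‖coeff p a i‖ ≤ M := by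
  obtain ⟨M, hM⟩ := ((tendsto_qPochhammer hp a).div (tendsto_qPochhammer hp p)
    (tprod_one_sub_mul_pow_ne_zero hp hp)).norm.bddAbove_range
  exact ⟨M, fun i => hM ⟨i, rfl⟩⟩

lemma hasSum_series (hp : ‖p‖ < 1) (a : ℂ) {w : ℂ} (hw : ‖w‖ < 1) :
    HasSum (fun i => coeff p a i * w ^ i) (series p a w) :=
  have ⟨_, hM⟩ := exists_norm_coeff_le hp a
  (summable_mul_pow_of_norm_le hM hw).hasSum

lemma one_sub_mul_series (hp : ‖p‖ < 1) (a : ℂ) {w : ℂ} (hw : ‖w‖ < 1) :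
    (1 - w) * series p a w = (1 - a * w) * series p a (p * w) := by
  have hpw : ‖p * w‖ < 1 := by simpa [mul_comm] using (norm_mul_pow_le hp w 1).trans_lt hw
  have hpw_series : HasSum (fun i => coeff p a i * p ^ i * w ^ i) (series p a (p * w)) :=
    (hasSum_series hp a hpw).congr_fun fun i => by ring
  have hw_shift := (hasSum_series hp a hw).one_sub_mul_mul_pow 1
  have hcompare := hw_shift.unique <| (hpw_series.one_sub_mul_mul_pow a).congr_fun fun i => by
    linear_combination w ^ (i + 1) * coeff_succ_mul hp a i
  linear_combination hcompare

lemma series_mul_qPochhammer (hp : ‖p‖ < 1) (a : ℂ) {z : ℂ} (hz : ‖z‖ < 1) (n : ℕ) :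
    series p a z * qPochhammer z p n = qPochhammer (a * z) p n * series p a (p ^ n * z) := by
  induction n with
  | zero => simp [qPochhammer]
  | succ n ih =>
    have hstep := one_sub_mul_series hp a
      (w := p ^ n * z) (by simpa [mul_comm] using (norm_mul_pow_le hp z n).trans_lt hz)
    rw [qPochhammer_succ, qPochhammer_succ, ← mul_assoc, ih, pow_succ', mul_assoc p]
    linear_combination qPochhammer (a * z) p n * hstep

theorem hasSum_coeff_mul_pow (hp : ‖p‖ < 1) (a : ℂ) {z : ℂ} (hz : ‖z‖ < 1) :
    HasSum (fun i => coeff p a i * z ^ i)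
      ((∏' k : ℕ, (1 - a * z * p ^ k)) / ∏' k : ℕ, (1 - z * p ^ k)) := by
  obtain ⟨M, hM⟩ := exists_norm_coeff_le hp a
  have hseries_lim : Tendsto (fun n => series p a (p ^ n * z)) atTop (𝓝 1) := by
    simpa only [series, coeff_zero] using tendsto_tsum_mul_pow_of_tendsto_zero hM
      (by simpa using (tendsto_pow_atTop_nhds_zero_of_norm_lt_one hp).mul_const z)
  have hlim := tendsto_nhds_unique
    (((tendsto_qPochhammer hp z).const_mul (series p a z)).congr (series_mul_qPochhammer hp a hz))
    ((tendsto_qPochhammer hp (a * z)).mul hseries_lim)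
  have hvalue : series p a z = (∏' k : ℕ, (1 - a * z * p ^ k)) / ∏' k : ℕ, (1 - z * p ^ k) := by
    rw [eq_div_iff (tprod_one_sub_mul_pow_ne_zero hp hz), hlim, mul_one]
  exact hvalue ▸ hasSum_series hp a hz

end QBinomial

/-- the (commutative, analytic) q-binomial theorem of Gauss.
For `|q| < 1` and `|z| < 1`, `Σ_{i=0}^∞ (a)_i/(q²)_i z^i = (az)_∞/(z)_∞`, where
`(a)_i = ∏_{k<i} (1 - a q^{2k})` and `(a)_∞ = ∏_{k≥0} (1 - a q^{2k})`. -/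
theorem q_binomial_theorem
    (q a z : ℂ) (hq : ‖q‖ < 1) (hz : ‖z‖ < 1) :
    HasSum
      (fun i : ℕ =>
        ((∏ k ∈ Finset.range i, (1 - a * q ^ (2 * k))) /
         (∏ k ∈ Finset.range i, (1 - q ^ 2 * q ^ (2 * k)))) * z ^ i)
      ((∏' k : ℕ, (1 - a * z * q ^ (2 * k))) / (∏' k : ℕ, (1 - z * q ^ (2 * k)))) := by
  have hq2 : ‖q ^ 2‖ < 1 := by
    rw [norm_pow]
    exact pow_lt_one₀ (norm_nonneg q) hq two_ne_zero
  simpa only [QBinomial.coeff, QBinomial.qPochhammer, pow_mul] using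
    QBinomial.hasSum_coeff_mul_pow hq2 a hz
end

section
/- In U_q(sl_{n+1}) with q not a root of unity, for the Chevalley generators F_i, F_{i+1} of the negative part (satisfying the quantum Serre relations F_{i+1}² F_i − (q+q^{−1}) F_{i+1} F_i F_{i+1} + F_i F_{i+1}² = 0), the following identity holds in the Ore localization of U_q^−(sl_{n+1}) at F_{i+1}: for every k ∈ ℤ, F_{i+1}^k F_i F_{i+1}^{−k} = {k} F_{i+1} F_i F_{i+1}^{−1} + {1−k} F_i, where {k} = (q^k − q^{−k})/(q − q^{−1}). -/
/-!
Conjugation by `u = F_{i+1}` is a `ℂ`-linear automorphism `σ`, and the Serre relation, multiplied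
on the right by `u⁻²`, reads `σ² F_i + F_i = (q + q⁻¹) σ F_i`. Hence `x_k = σ^k F_i` satisfies the
recurrence `x_{k+1} + x_{k-1} = (q + q⁻¹) x_k` on all of `ℤ`, whose solutions are
`x_k = {k} x_1 + {1-k} x_0` because the `q`-numbers satisfy the same recurrence with
`{0} = 0`, `{1} = 1`.
-/

/-- The symmetric q-number `{k} = (q^k - q^{-k})/(q - q^{-1})`. -/
noncomputable def symQNum (q : ℂ) (k : ℤ) : ℂ := (q ^ k - q ^ (-k)) / (q - q⁻¹)

theorem eq_of_secondOrderRecurrence {M : Type*} [AddGroup M] (f : M → M) {x y : ℤ → M}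
    (hx : ∀ k, x (k + 1) + x (k - 1) = f (x k)) (hy : ∀ k, y (k + 1) + y (k - 1) = f (y k))
    (h₀ : x 0 = y 0) (h₁ : x 1 = y 1) : x = y := by
  suffices h : ∀ k, x k = y k ∧ x (k + 1) = y (k + 1) from funext fun k => (h k).1
  intro k
  induction k using Int.induction_on with
  | zero => exact ⟨h₀, h₁⟩
  | succ m ih =>
    refine ⟨ih.2, ?_⟩
    have hx' := eq_sub_of_add_eq (hx (m + 1))
    have hy' := eq_sub_of_add_eq (hy (m + 1))
    simp only [add_sub_cancel_right] at hx' hy'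
    rw [hx', hy', ih.1, ih.2]
  | pred m ih =>
    refine ⟨?_, by rw [sub_add_cancel]; exact ih.1⟩
    have hx' := eq_neg_add_of_add_eq (hx (-m))
    have hy' := eq_neg_add_of_add_eq (hy (-m))
    rw [hx', hy', ih.1, ih.2]

namespace symQNum

variable {q : ℂ}

@[simp] theorem zero : symQNum q 0 = 0 := by simp [symQNum]

theorem one (hq : q ≠ 0) (hq2 : q ^ 2 ≠ 1) : symQNum q 1 = 1 := by
  have : q - q⁻¹ ≠ 0 := by
    rw [sub_ne_zero]
    rintro h
    exact hq2 (by rw [sq]; nth_rewrite 2 [h]; exact mul_inv_cancel₀ hq)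
  simp [symQNum, this]

theorem add_one_add_sub_one (hq : q ≠ 0) (k : ℤ) :
    symQNum q (k + 1) + symQNum q (k - 1) = (q + q⁻¹) * symQNum q k := by
  simp only [symQNum, neg_add, neg_sub, zpow_add₀ hq, zpow_sub₀ hq, zpow_neg, zpow_one]
  ring

end symQNum

theorem eq_symQNum_smul_of_recurrence {M : Type*} [AddCommGroup M] [Module ℂ M] {q : ℂ}
    (hq : q ≠ 0) (hq2 : q ^ 2 ≠ 1) {x : ℤ → M}
    (hx : ∀ k, x (k + 1) + x (k - 1) = (q + q⁻¹) • x k) (k : ℤ) :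
    x k = symQNum q k • x 1 + symQNum q (1 - k) • x 0 := by
  refine congrFun (eq_of_secondOrderRecurrence (fun m => (q + q⁻¹) • m)
    (y := fun k => symQNum q k • x 1 + symQNum q (1 - k) • x 0) hx (fun k => ?_)
    (by simp [symQNum.one hq hq2]) (by simp [symQNum.one hq hq2])) k
  have h₁ := symQNum.add_one_add_sub_one hq k
  have h₀ := symQNum.add_one_add_sub_one hq (1 - k)
  rw [show 1 - k + 1 = 1 - (k - 1) by ring, show 1 - k - 1 = 1 - (k + 1) by ring] at h₀
  linear_combination (norm := module) h₁ • x 1 + h₀ • x 0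

theorem zpow_smul_add_zpow_smul {R G M : Type*} [Semiring R] [Group G] [AddCommMonoid M]
    [Module R M] [DistribMulAction G M] [SMulCommClass G R M] {g : G} {a : M} {c : R}
    (h : g ^ 2 • a + a = c • g • a) (k : ℤ) :
    g ^ (k + 1) • a + g ^ (k - 1) • a = c • g ^ k • a := by
  have e₁ : g ^ (k + 1) = g ^ (k - 1) * g ^ 2 := by
    rw [← zpow_natCast, ← zpow_add]; congr 1; push_cast; ring
  have e₂ : g ^ k = g ^ (k - 1) * g := by rw [← zpow_add_one, sub_add_cancel]
  rw [e₁, e₂, mul_smul, mul_smul, ← smul_add, h, smul_comm]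

theorem ConjAct.toConjAct_sq_smul_add_of_serre {R A : Type*} [CommSemiring R] [Ring A]
    [Algebra R A] {u : Aˣ} {a : A} {c : R}
    (h : (u : A) ^ 2 * a - c • ((u : A) * a * u) + a * (u : A) ^ 2 = 0) :
    ConjAct.toConjAct u ^ 2 • a + a = c • ConjAct.toConjAct u • a := by
  rw [← map_pow, ConjAct.units_smul_def, ConjAct.units_smul_def, ConjAct.ofConjAct_toConjAct,
    ConjAct.ofConjAct_toConjAct]
  have := congrArg (· * ((u⁻¹ : Aˣ) : A) ^ 2) h
  simp only [sub_mul, add_mul, zero_mul, smul_mul_assoc, mul_assoc, sq, Units.mul_inv_cancel_left,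
    Units.mul_inv, mul_one] at this
  rw [← inv_pow, Units.val_pow_eq_pow_val, Units.val_pow_eq_pow_val, ← sub_eq_zero, ← this]
  simp only [sq, mul_assoc]
  abel

theorem conjugation_by_powers_of_generator_general
    (A : Type*) [Ring A] [Algebra ℂ A]
    (q : ℂ) (hq : q ≠ 0) (hq_not_root : ∀ k : ℕ, 0 < k → q ^ k ≠ 1)
    -- `Fi` is the image of `F_i`; the unit `u` is the (invertible) image of `F_{i+1}`
    (Fi : A) (u : Aˣ)
    -- quantum Serre relations between `F_i` and `F_{i+1}`
    (hSerre₁ : (u : A) ^ 2 * Fi - (q + q⁻¹) • ((u : A) * Fi * (u : A)) + Fi * (u : A) ^ 2 = 0)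
    (k : ℤ) :
    ((u ^ k : Aˣ) : A) * Fi * ((u ^ (-k) : Aˣ) : A) =
      symQNum q k • ((u : A) * Fi * ((u⁻¹ : Aˣ) : A)) + symQNum q (1 - k) • Fi := by
  have hconj : ∀ m : ℤ, ((u ^ m : Aˣ) : A) * Fi * ((u ^ (-m) : Aˣ) : A) =
      ConjAct.toConjAct u ^ m • Fi := fun m => by
    rw [← map_zpow, ConjAct.units_smul_def, ConjAct.ofConjAct_toConjAct, zpow_neg]
  have hrec := zpow_smul_add_zpow_smul (ConjAct.toConjAct_sq_smul_add_of_serre hSerre₁)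
  rw [hconj, eq_symQNum_smul_of_recurrence (x := (ConjAct.toConjAct u ^ · • Fi)) hq
    (hq_not_root 2 two_pos) hrec k]
  simp [ConjAct.units_smul_def]

/-- in the Ore localization of `U_q⁻(sl_{n+1})` at `F_{i+1}` (q not a root of
unity), where `F_i, F_{i+1}` satisfy the quantum Serre relations, one has for every `k ∈ ℤ`:
`F_{i+1}^k F_i F_{i+1}^{-k} = {k} F_{i+1} F_i F_{i+1}^{-1} + {1-k} F_i`. -/
theorem conjugation_by_powers_of_generator
    (A : Type*) [Ring A] [Algebra ℂ A]
    (q : ℂ) (hq : q ≠ 0) (hq_not_root : ∀ k : ℕ, 0 < k → q ^ k ≠ 1)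
    -- `Fi` is the image of `F_i`; the unit `u` is the (invertible) image of `F_{i+1}`
    (Fi : A) (u : Aˣ)
    -- quantum Serre relations between `F_i` and `F_{i+1}`
    (hSerre₁ : (u : A) ^ 2 * Fi - (q + q⁻¹) • ((u : A) * Fi * (u : A)) + Fi * (u : A) ^ 2 = 0)
    (hSerre₂ : Fi ^ 2 * (u : A) - (q + q⁻¹) • (Fi * (u : A) * Fi) + (u : A) * Fi ^ 2 = 0)
    (k : ℤ) :
    ((u ^ k : Aˣ) : A) * Fi * ((u ^ (-k) : Aˣ) : A) =
      symQNum q k • ((u : A) * Fi * ((u⁻¹ : Aˣ) : A)) + symQNum q (1 - k) • Fi :=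
  conjugation_by_powers_of_generator_general A q hq hq_not_root Fi u hSerre₁ k
end

section
/- In the localization of U_q^−(sl_{n+1}) at F_{i+1} (q not a root of unity), define S¹(t) = F_{i+1}^t F_i F_{i+1}^{1−t} := {t} F_{i+1} F_i F_{i+1}^{−1}·F_{i+1} + {1−t} F_i F_{i+1}, i.e., S¹(t) = {t} F_{i+1} F_i + {1−t} F_i F_{i+1}, with {t} = (q^t − q^{−t})/(q − q^{−1}). Then for any integer N ≥ 1 and t ∈ ℤ, F_{i+1}^t F_i^N F_{i+1}^{N−t} = S¹(t) S¹(t−1) ⋯ S¹(t−N+1). -/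
def ThreeTermRecurrence {R M : Type*} [SMul R M] [Add M] (c : R) (f : ℤ → M) : Prop :=
  ∀ s, f (s + 1) + f (s - 1) = c • f s

namespace ThreeTermRecurrence

variable {R M : Type*}

theorem add [Monoid R] [AddCommMonoid M] [DistribMulAction R M] {c : R} {f g : ℤ → M}
    (hf : ThreeTermRecurrence c f) (hg : ThreeTermRecurrence c g) :
    ThreeTermRecurrence c (f + g) := fun s => by
  simp only [Pi.add_apply, smul_add, ← hf s, ← hg s]
  abel

theorem smul_const [Semiring R] [AddCommMonoid M] [Module R M] {c : R} {a : ℤ → R}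
    (ha : ThreeTermRecurrence c a) (y : M) : ThreeTermRecurrence c (fun s => a s • y) :=
  fun s => by rw [← add_smul, ha s, smul_eq_mul, mul_smul]

theorem comp_sub_left [SMul R M] [AddCommMagma M] {c : R} {f : ℤ → M}
    (hf : ThreeTermRecurrence c f) (k : ℤ) : ThreeTermRecurrence c (fun s => f (k - s)) :=
  fun s => by
    show f (k - (s + 1)) + f (k - (s - 1)) = c • f (k - s)
    rw [add_comm, show k - (s - 1) = k - s + 1 by ring, show k - (s + 1) = k - s - 1 by ring]
    exact hf (k - s)

theorem eq_of_eq_zero_of_eq_one [SMul R M] [AddCancelCommMonoid M] {c : R} {f g : ℤ → M}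
    (hf : ThreeTermRecurrence c f) (hg : ThreeTermRecurrence c g)
    (h₀ : f 0 = g 0) (h₁ : f 1 = g 1) : f = g := by
  suffices ∀ s : ℤ, f s = g s ∧ f (s + 1) = g (s + 1) from funext fun s => (this s).1
  intro s
  induction s using Int.induction_on with
  | zero => exact ⟨h₀, by simpa using h₁⟩
  | succ n ih =>
    refine ⟨ih.2, add_right_cancel (b := f n) ?_⟩
    have hfn := hf (n + 1)
    have hgn := hg (n + 1)
    simp only [add_sub_cancel_right] at hfn hgn
    rw [hfn, ih.1, ih.2, ← hgn]
  | pred n ih =>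
    refine ⟨add_left_cancel (a := f (-n + 1)) ?_, by simpa using ih.1⟩
    have hfn := hf (-n)
    have hgn := hg (-n)
    rw [hfn, ih.1, ih.2, ← hgn]

end ThreeTermRecurrence

theorem sub_inv_ne_zero_of_sq_ne_one {K : Type*} [DivisionRing K] {q : K} (hq : q ≠ 0)
    (hq2 : q ^ 2 ≠ 1) : q - q⁻¹ ≠ 0 := by
  intro h
  exact hq2 (by rw [sq, congrArg (q * ·) (sub_eq_zero.mp h), mul_inv_cancel₀ hq])

theorem symQNum_zero (q : ℂ) : symQNum q 0 = 0 := by simp [symQNum]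

theorem symQNum_one {q : ℂ} (hq : q - q⁻¹ ≠ 0) : symQNum q 1 = 1 := by
  simp [symQNum, div_self hq]

theorem threeTermRecurrence_symQNum {q : ℂ} (hq : q ≠ 0) :
    ThreeTermRecurrence (q + q⁻¹) (symQNum q) := fun s => by
  simp only [symQNum, smul_eq_mul, neg_add, neg_sub, zpow_add₀ hq, zpow_sub₀ hq, zpow_neg,
    zpow_one]
  field_simp
  ring

section Units

variable {R A : Type*} [CommSemiring R] [Ring A] [Algebra R A]

theorem Units.mul_mul_inv_add_inv_mul_mul {u : Aˣ} {x : A} {c : R}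
    (h : (u : A) ^ 2 * x - c • ((u : A) * x * u) + x * (u : A) ^ 2 = 0) :
    (u : A) * x * ↑u⁻¹ + ↑u⁻¹ * x * u = c • x := by
  have := congrArg (fun y => (↑u⁻¹ : A) * y * ↑u⁻¹) h
  simp only [mul_add, mul_sub, add_mul, sub_mul, mul_smul_comm, smul_mul_assoc, sq, ← mul_assoc,
    Units.inv_mul, one_mul, mul_zero, zero_mul] at this
  simp only [mul_assoc, Units.mul_inv, mul_one] at this
  rw [← sub_eq_zero, ← this]
  simp only [mul_assoc]
  abel

theorem threeTermRecurrence_zpow_mul_mul_zpow {u : Aˣ} {x : A} {c : R}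
    (h : (u : A) * x * ↑u⁻¹ + ↑u⁻¹ * x * u = c • x) (k : ℤ) :
    ThreeTermRecurrence c (fun s => ((u ^ s : Aˣ) : A) * x * ((u ^ (k - s) : Aˣ) : A)) :=
  fun s => by
    dsimp only
    rw [show k - (s + 1) = -1 + (k - s) by ring, show k - (s - 1) = 1 + (k - s) by ring,
      zpow_add_one, zpow_sub_one, zpow_add, zpow_add, zpow_neg_one, zpow_one]
    simp only [Units.val_mul]
    calc _ = ((u ^ s : Aˣ) : A) * ((u : A) * x * ↑u⁻¹ + ↑u⁻¹ * x * u)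
          * ((u ^ (k - s) : Aˣ) : A) := by noncomm_ring
      _ = _ := by rw [h, mul_smul_comm, smul_mul_assoc]

theorem Units.prod_range_zpow_mul_mul_zpow (u : Aˣ) (x : A) (t : ℤ) (N : ℕ) :
    ((List.range N).map fun j : ℕ =>
        ((u ^ (t - j) : Aˣ) : A) * x * ((u ^ (1 - (t - j)) : Aˣ) : A)).prod =
      ((u ^ t : Aˣ) : A) * x ^ N * ((u ^ ((N : ℤ) - t) : Aˣ) : A) := by
  induction N with
  | zero => simp [← Units.val_mul]
  | succ n ih =>
    rw [List.range_succ, List.map_append, List.prod_append, ih]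
    simp only [List.map_cons, List.map_nil, List.prod_cons, List.prod_nil, mul_one]
    have hcancel : ((u ^ ((n : ℤ) - t) : Aˣ) : A) * ((u ^ (t - n) : Aˣ) : A) = 1 := by
      rw [← Units.val_mul, ← zpow_add, sub_add_sub_cancel, sub_self, zpow_zero, Units.val_one]
    calc _ = ((u ^ t : Aˣ) : A) * x ^ n
          * (((u ^ ((n : ℤ) - t) : Aˣ) : A) * ((u ^ (t - n) : Aˣ) : A))
          * x * ((u ^ (1 - (t - n)) : Aˣ) : A) := by simp only [mul_assoc]
      _ = _ := by
        rw [hcancel, mul_one, mul_assoc _ (x ^ n), ← pow_succ, Nat.cast_succ,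
          sub_sub_eq_add_sub, add_comm 1]

end Units

theorem singular_vector_factorization_general
    (A : Type*) [Ring A] [Algebra ℂ A]
    (q : ℂ) (hq : q ≠ 0) (hq_not_root : ∀ k : ℕ, 0 < k → q ^ k ≠ 1)
    -- `Fi` is the image of `F_i`; the unit `u` is the (invertible) image of `F_{i+1}`
    (Fi : A) (u : Aˣ)
    -- quantum Serre relations between `F_i` and `F_{i+1}`
    (hSerre₁ : (u : A) ^ 2 * Fi - (q + q⁻¹) • ((u : A) * Fi * (u : A)) + Fi * (u : A) ^ 2 = 0)
    -- `S¹(t) = {t} F_{i+1} F_i + {1-t} F_iF_{i+1}`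
    (S : ℤ → A)
    (hS : ∀ t : ℤ, S t = symQNum q t • ((u : A) * Fi) + symQNum q (1 - t) • (Fi * (u : A)))
    (N : ℕ) (t : ℤ) :
    ((u ^ t : Aˣ) : A) * Fi ^ N * ((u ^ ((N : ℤ) - t) : Aˣ) : A) =
      ((List.range N).map (fun j => S (t - j))).prod := by
  have hq_sub_inv : q - q⁻¹ ≠ 0 := sub_inv_ne_zero_of_sq_ne_one hq (hq_not_root 2 two_pos)
  have hS_rec : ThreeTermRecurrence (q + q⁻¹) S := by
    rw [funext hS]
    exact ((threeTermRecurrence_symQNum hq).smul_const _).add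
      (((threeTermRecurrence_symQNum hq).comp_sub_left 1).smul_const _)
  have hL_rec :=
    threeTermRecurrence_zpow_mul_mul_zpow (Units.mul_mul_inv_add_inv_mul_mul hSerre₁) 1
  have hLS := hL_rec.eq_of_eq_zero_of_eq_one hS_rec
    (by simp [hS, symQNum_zero, symQNum_one hq_sub_inv])
    (by simp [hS, symQNum_zero, symQNum_one hq_sub_inv])
  subst hLS
  -- in the statement `List.range N` is coerced to a list of integers
  simp only [bind_pure_comp, List.map_eq_map, List.map_map, Function.comp_def]
  exact (Units.prod_range_zpow_mul_mul_zpow u Fi t N).symm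

/-- in the localization of `U_q⁻(sl_{n+1})` at `F_{i+1}` (q not a root of
unity), with `S¹(t) = {t} F_{i+1}F_i + {1-t} F_iF_{i+1}`, one has for every `N ≥ 1` and
`t ∈ ℤ`:  `F_{i+1}^t F_i^N F_{i+1}^{N-t} = S¹(t) S¹(t-1) ⋯ S¹(t-N+1)`. -/
theorem singular_vector_factorization
    (A : Type*) [Ring A] [Algebra ℂ A]
    (q : ℂ) (hq : q ≠ 0) (hq_not_root : ∀ k : ℕ, 0 < k → q ^ k ≠ 1)
    -- `Fi` is the image of `F_i`; the unit `u` is the (invertible) image of `F_{i+1}`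
    (Fi : A) (u : Aˣ)
    -- quantum Serre relations between `F_i` and `F_{i+1}`
    (hSerre₁ : (u : A) ^ 2 * Fi - (q + q⁻¹) • ((u : A) * Fi * (u : A)) + Fi * (u : A) ^ 2 = 0)
    (hSerre₂ : Fi ^ 2 * (u : A) - (q + q⁻¹) • (Fi * (u : A) * Fi) + (u : A) * Fi ^ 2 = 0)
    -- `S¹(t) = {t} F_{i+1} F_i + {1-t} F_i F_{i+1}`
    (S : ℤ → A)
    (hS : ∀ t : ℤ, S t = symQNum q t • ((u : A) * Fi) + symQNum q (1 - t) • (Fi * (u : A)))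
    (N : ℕ) (hN : 1 ≤ N) (t : ℤ) :
    ((u ^ t : Aˣ) : A) * Fi ^ N * ((u ^ ((N : ℤ) - t) : Aˣ) : A) =
      ((List.range N).map (fun j => S (t - j))).prod :=
  singular_vector_factorization_general A q hq hq_not_root Fi u hSerre₁ S hS N t
end

section
/- Let S¹(t) = {t} F_2 F_1 + {1−t} F_1 F_2 in U_q^−(sl_3) where F_1, F_2 satisfy the quantum Serre relations and {t} = (q^t−q^{−t})/(q−q^{−1}), q not a root of unity. Then for any t, the element S¹(t) applied to the highest weight vector v_λ of the Verma module M(λ) over U_q(sl_3) with λ = (λ_1, λ_2) satisfying λ_1 + λ_2 + 2 = 1 and λ_1 = t − 1 (equivalently λ_2 = −t) is a singular vector: E_1 S¹(t) v_λ = E_2 S¹(t) v_λ = 0. -/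
/-- The symmetric q-number `{t} = (q^t - q^{-t})/(q - q^{-1})` for complex `t`
(complex powers of `q`). -/
noncomputable def symQNumC (q t : ℂ) : ℂ := (q ^ t - q ^ (-t)) / (q - q⁻¹)

/-- singular vectors in Verma modules over `U_q(sl₃)`.
If `M(λ)` is a Verma module over `U_q(sl₃)` with highest weight `λ = (t-1, -t)` (so that
`λ₁ + λ₂ + 2 = 1`), then `S¹(t)v_λ = ({t} F₂F₁ + {1-t} F₁F₂)v_λ` is a singular vector:
it is annihilated by `E₁` and `E₂`. -/
theorem sl3_singular_vector
    (q : ℂ) (hq : q ≠ 0) (hq_not_root : ∀ k : ℕ, 0 < k → q ^ k ≠ 1)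
    (M : Type*) [AddCommGroup M] [Module ℂ M]
    (E₁ E₂ F₁ F₂ K₁ K₂ K₁' K₂' : Module.End ℂ M)
    -- K K⁻¹ = 1
    (hK₁ : K₁ * K₁' = 1) (hK₂ : K₂ * K₂' = 1)
    (hK₁' : K₁' * K₁ = 1) (hK₂' : K₂' * K₂ = 1)
    -- Cartan relations, with Cartan matrix a₁₁ = a₂₂ = 2, a₁₂ = a₂₁ = -1
    (hKE₁₁ : K₁ * E₁ = (q ^ (2:ℤ)) • (E₁ * K₁)) (hKE₁₂ : K₁ * E₂ = (q ^ (-1:ℤ)) • (E₂ * K₁))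
    (hKE₂₁ : K₂ * E₁ = (q ^ (-1:ℤ)) • (E₁ * K₂)) (hKE₂₂ : K₂ * E₂ = (q ^ (2:ℤ)) • (E₂ * K₂))
    (hKF₁₁ : K₁ * F₁ = (q ^ (-2:ℤ)) • (F₁ * K₁)) (hKF₁₂ : K₁ * F₂ = (q ^ (1:ℤ)) • (F₂ * K₁))
    (hKF₂₁ : K₂ * F₁ = (q ^ (1:ℤ)) • (F₁ * K₂)) (hKF₂₂ : K₂ * F₂ = (q ^ (-2:ℤ)) • (F₂ * K₂))
    -- E-F commutation relations
    (hEF₁₁ : E₁ * F₁ - F₁ * E₁ = ((q - q⁻¹)⁻¹) • (K₁ - K₁'))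
    (hEF₂₂ : E₂ * F₂ - F₂ * E₂ = ((q - q⁻¹)⁻¹) • (K₂ - K₂'))
    (hEF₁₂ : E₁ * F₂ = F₂ * E₁) (hEF₂₁ : E₂ * F₁ = F₁ * E₂)
    -- quantum Serre relations
    (hSerreE₁ : E₁ ^ 2 * E₂ - (q + q⁻¹) • (E₁ * E₂ * E₁) + E₂ * E₁ ^ 2 = 0)
    (hSerreE₂ : E₂ ^ 2 * E₁ - (q + q⁻¹) • (E₂ * E₁ * E₂) + E₁ * E₂ ^ 2 = 0)
    (hSerreF₁ : F₁ ^ 2 * F₂ - (q + q⁻¹) • (F₁ * F₂ * F₁) + F₂ * F₁ ^ 2 = 0)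
    (hSerreF₂ : F₂ ^ 2 * F₁ - (q + q⁻¹) • (F₂ * F₁ * F₂) + F₁ * F₂ ^ 2 = 0)
    -- highest weight vector of weight λ = (λ₁, λ₂) = (t - 1, -t)
    (t : ℂ)
    (v : M) (hv : v ≠ 0)
    (hE₁v : E₁ v = 0) (hE₂v : E₂ v = 0)
    (hK₁v : K₁ v = (q ^ (t - 1)) • v) (hK₂v : K₂ v = (q ^ (-t)) • v)
    (hK₁'v : K₁' v = (q ^ (-(t - 1))) • v) (hK₂'v : K₂' v = (q ^ t) • v) :
    E₁ (symQNumC q t • F₂ (F₁ v) + symQNumC q (1 - t) • F₁ (F₂ v)) = 0 ∧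
    E₂ (symQNumC q t • F₂ (F₁ v) + symQNumC q (1 - t) • F₁ (F₂ v)) = 0 := by

  set c : ℂ := (q - q⁻¹)⁻¹ with hc
  -- cpow arithmetic facts
  have hcp1 : q * q ^ (t - 1) = q ^ t := by
    have h := Complex.cpow_add 1 (t - 1) hq
    rw [Complex.cpow_one, show (1:ℂ) + (t - 1) = t by ring] at h
    exact h.symm
  have hcp2 : q ^ (-t) * q ^ t = 1 := by
    have h := Complex.cpow_add (-t) t hq
    rw [show -t + t = (0:ℂ) by ring, Complex.cpow_zero] at h
    exact h.symm
  have hcp3 : q * q ^ (-t) = q ^ (1 - t) := by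
    have h := Complex.cpow_add 1 (-t) hq
    rw [Complex.cpow_one, show (1:ℂ) + -t = 1 - t by ring] at h
    exact h.symm
  have hcp4 : q ^ (t - 1) * q ^ (1 - t) = 1 := by
    have h := Complex.cpow_add (t - 1) (1 - t) hq
    rw [show (t-1) + (1-t) = (0:ℂ) by ring, Complex.cpow_zero] at h
    exact h.symm
  -- E₁ (F₁ v)
  have hE1F1 : E₁ (F₁ v) = (c * (q ^ (t-1) - q ^ (-(t-1)))) • v := by
    have h := DFunLike.congr_fun hEF₁₁ v
    simp only [LinearMap.sub_apply, LinearMap.smul_apply, Module.End.mul_apply, hE₁v,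
      map_zero, sub_zero, hK₁v, hK₁'v] at h
    rw [h, smul_sub, smul_smul, smul_smul, ← sub_smul, ← mul_sub]
  -- E₁ (F₂ v) = 0
  have hE1F2 : E₁ (F₂ v) = 0 := by
    have h := DFunLike.congr_fun hEF₁₂ v
    simp only [Module.End.mul_apply, hE₁v, map_zero] at h
    exact h
  -- E₂ (F₁ v) = 0
  have hE2F1 : E₂ (F₁ v) = 0 := by
    have h := DFunLike.congr_fun hEF₂₁ v
    simp only [Module.End.mul_apply, hE₂v, map_zero] at h
    exact h
  -- E₂ (F₂ v)
  have hE2F2 : E₂ (F₂ v) = (c * (q ^ (-t) - q ^ t)) • v := by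
    have h := DFunLike.congr_fun hEF₂₂ v
    simp only [LinearMap.sub_apply, LinearMap.smul_apply, Module.End.mul_apply, hE₂v,
      map_zero, sub_zero, hK₂v, hK₂'v] at h
    rw [h, smul_sub, smul_smul, smul_smul, ← sub_smul, ← mul_sub]
  -- K₁ (F₂ v)
  have hK1F2 : K₁ (F₂ v) = (q ^ t) • F₂ v := by
    have h := DFunLike.congr_fun hKF₁₂ v
    simp only [Module.End.mul_apply, LinearMap.smul_apply, hK₁v, map_smul, zpow_one] at h
    rw [h, smul_smul, hcp1]
  -- K₁' (F₂ v)
  have hK1'F2 : K₁' (F₂ v) = (q ^ (-t)) • F₂ v := by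
    have h := DFunLike.congr_fun hK₁' (F₂ v)
    simp only [Module.End.mul_apply, Module.End.one_apply, hK1F2, map_smul] at h
    calc K₁' (F₂ v) = (1:ℂ) • K₁' (F₂ v) := (one_smul ℂ _).symm
    _ = (q ^ (-t) * q ^ t) • K₁' (F₂ v) := by rw [hcp2]
    _ = (q ^ (-t)) • ((q ^ t) • K₁' (F₂ v)) := by rw [mul_smul]
    _ = (q ^ (-t)) • F₂ v := by rw [h]
  -- K₂ (F₁ v)
  have hK2F1 : K₂ (F₁ v) = (q ^ (1 - t)) • F₁ v := by
    have h := DFunLike.congr_fun hKF₂₁ v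
    simp only [Module.End.mul_apply, LinearMap.smul_apply, hK₂v, map_smul, zpow_one] at h
    rw [h, smul_smul, hcp3]
  -- K₂' (F₁ v)
  have hK2'F1 : K₂' (F₁ v) = (q ^ (t - 1)) • F₁ v := by
    have h := DFunLike.congr_fun hK₂' (F₁ v)
    simp only [Module.End.mul_apply, Module.End.one_apply, hK2F1, map_smul] at h
    calc K₂' (F₁ v) = (1:ℂ) • K₂' (F₁ v) := (one_smul ℂ _).symm
    _ = (q ^ (t-1) * q ^ (1-t)) • K₂' (F₁ v) := by rw [hcp4]
    _ = (q ^ (t-1)) • ((q ^ (1-t)) • K₂' (F₁ v)) := by rw [mul_smul]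
    _ = (q ^ (t-1)) • F₁ v := by rw [h]
  -- E₁ (F₂ (F₁ v))
  have hA : E₁ (F₂ (F₁ v)) = (c * (q ^ (t-1) - q ^ (-(t-1)))) • F₂ v := by
    have h := DFunLike.congr_fun hEF₁₂ (F₁ v)
    simp only [Module.End.mul_apply] at h
    rw [h, hE1F1, map_smul]
  -- E₁ (F₁ (F₂ v))
  have hB : E₁ (F₁ (F₂ v)) = (c * (q ^ t - q ^ (-t))) • F₂ v := by
    have h := DFunLike.congr_fun hEF₁₁ (F₂ v)
    simp only [LinearMap.sub_apply, LinearMap.smul_apply, Module.End.mul_apply,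
      hE1F2, map_zero, sub_zero, hK1F2, hK1'F2] at h
    rw [h, smul_sub, smul_smul, smul_smul, ← sub_smul, ← mul_sub]
  -- E₂ (F₂ (F₁ v))
  have hC : E₂ (F₂ (F₁ v)) = (c * (q ^ (1-t) - q ^ (t-1))) • F₁ v := by
    have h := DFunLike.congr_fun hEF₂₂ (F₁ v)
    simp only [LinearMap.sub_apply, LinearMap.smul_apply, Module.End.mul_apply,
      hE2F1, map_zero, sub_zero, hK2F1, hK2'F1] at h
    rw [h, smul_sub, smul_smul, smul_smul, ← sub_smul, ← mul_sub]
  -- E₂ (F₁ (F₂ v))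
  have hD : E₂ (F₁ (F₂ v)) = (c * (q ^ (-t) - q ^ t)) • F₁ v := by
    have h := DFunLike.congr_fun hEF₂₁ (F₂ v)
    simp only [Module.End.mul_apply] at h
    rw [h, hE2F2, map_smul]
  constructor
  · rw [map_add, map_smul, map_smul, hA, hB, smul_smul, smul_smul, ← add_smul]
    convert zero_smul ℂ (F₂ v)
    simp only [symQNumC, hc, div_eq_mul_inv, show -(t-1) = 1 - t by ring,
      show -(1-t) = t - 1 by ring]
    ring
  · rw [map_add, map_smul, map_smul, hC, hD, smul_smul, smul_smul, ← add_smul]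
    convert zero_smul ℂ (F₁ v)
    simp only [symQNumC, hc, div_eq_mul_inv, show -(t-1) = 1 - t by ring,
      show -(1-t) = t - 1 by ring]
    ring
end

section
/- In the Verma module M(λ) over U_q(g) for a symmetrizable Kac-Moody algebra g, extended by allowing integer powers of F_i (the module U_q^−[F_i^{−1}] v_λ), the action of E_j satisfies E_j F_i^m v_λ = δ_{ij} {m} · ((q_i^{λ_i − m + 1} − q_i^{−λ_i + m − 1})/(q_i − q_i^{−1})) F_i^{m−1} v_λ for all m ∈ ℤ, where {m} = (q_i^m − q_i^{−m})/(q_i − q_i^{−1}). -/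
/-!
Commuting `E_j` past one `F_i` gives
`E_j F_i^{m+1} v_λ = F_i E_j F_i^m v_λ + δ_{ij} (K_i - K_i⁻¹)/(q_i - q_i⁻¹) F_i^m v_λ`,
and `F_i^m v_λ` is a `K_i`-eigenvector of eigenvalue `q_i^{λ_i - 2m}`. So the coefficient `c_m`
in `E_i F_i^m v_λ = c_m F_i^{m-1} v_λ` satisfies `c_{m+1} = c_m + [λ_i - 2m]_{q_i}` with
`c_0 = 0`, which the closed form solves; as `F_i` is invertible the recurrence also runs
downwards, to `m < 0`.
-/

/-- The symmetric q-number `{m} = (p^m - p^{-m})/(p - p^{-1})` (integer powers). -/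
noncomputable def symQNumZ (p : ℂ) (m : ℤ) : ℂ := (p ^ m - p ^ (-m)) / (p - p⁻¹)

namespace Module.End

variable {R M : Type*} [Semiring R] [AddCommMonoid M] [Module R M]

theorem units_zpow_add_one_apply (u : (Module.End R M)ˣ) (m : ℤ) (v : M) :
    ((u ^ (m + 1) : (Module.End R M)ˣ) : Module.End R M) v =
      (u : Module.End R M) (((u ^ m : (Module.End R M)ˣ) : Module.End R M) v) := by
  rw [add_comm, zpow_one_add, Units.val_mul, Module.End.mul_apply]

theorem units_injective (u : (Module.End R M)ˣ) :
    Function.Injective (u : Module.End R M) :=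
  ((Module.End.isUnit_iff _).mp u.isUnit).injective

theorem apply_units_zpow_apply_eq_zero_of_commute {E : Module.End R M}
    {u : (Module.End R M)ˣ} (hEu : Commute E u) {v : M} (hv : E v = 0) (m : ℤ) :
    E (((u ^ m : (Module.End R M)ˣ) : Module.End R M) v) = 0 := by
  rw [← Module.End.mul_apply, (hEu.units_zpow_right m).eq, Module.End.mul_apply, hv, map_zero]

end Module.End

section

variable {𝕜 M : Type*} [Field 𝕜] [AddCommGroup M] [Module 𝕜 M]
  {U : Module.End 𝕜 M} {f : ℤ → M}

theorem orbit_apply_eq_smul_of_mul_eq_smul_mul (hU : Function.Injective U)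
    (hf : ∀ m, f (m + 1) = U (f m)) {K : Module.End 𝕜 M} {c μ : 𝕜} (hc : c ≠ 0)
    (hKU : K * U = c • (U * K)) (h0 : K (f 0) = μ • f 0) (m : ℤ) :
    K (f m) = (c ^ m * μ) • f m := by
  have hK : ∀ x, K (U x) = c • U (K x) := fun x => by
    rw [← Module.End.mul_apply, hKU]; rfl
  induction m using Int.induction_on with
  | zero => simpa using h0
  | succ k ih =>
    rw [hf, hK, ih, map_smul, smul_smul, zpow_add_one₀ hc, mul_comm c, mul_right_comm]
  | pred k ih =>
    apply hU
    have hk := hK (f (-k - 1))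
    rw [← hf, sub_add_cancel, ih] at hk
    rw [map_smul, ← hf, sub_add_cancel, ← (inv_smul_eq_iff₀ hc).mpr hk, smul_smul,
      zpow_sub_one₀ hc, mul_right_comm, mul_comm c⁻¹]

theorem orbit_apply_eq_smul_of_step (hU : Function.Injective U)
    (hf : ∀ m, f (m + 1) = U (f m)) {E : Module.End 𝕜 M} {c s : ℤ → 𝕜}
    (hE : ∀ m, E (f (m + 1)) = U (E (f m)) + s m • f m) (hc : ∀ m, c (m + 1) = c m + s m)
    (h0 : E (f 0) = c 0 • f (-1)) (m : ℤ) :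
    E (f m) = c m • f (m - 1) := by
  have hf' : ∀ m, U (f (m - 1)) = f m := fun m => by rw [← hf, sub_add_cancel]
  induction m using Int.induction_on with
  | zero => simpa using h0
  | succ k ih =>
    rw [hE, ih, map_smul, hf', hc, add_smul, add_sub_cancel_right]
  | pred k ih =>
    apply hU
    have hk := hE (-k - 1)
    rw [sub_add_cancel, ih] at hk
    rw [eq_sub_of_add_eq hk.symm, map_smul, hf', ← sub_smul, sub_eq_iff_eq_add.mpr]
    rw [← hc, sub_add_cancel]

end

noncomputable def localizedVermaCoeff (p L : ℂ) (m : ℤ) : ℂ :=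
  symQNumZ p m * (p ^ (L - m + 1) - p ^ (-L + m - 1)) / (p - p⁻¹)

theorem Complex.cpow_add_intCast {p : ℂ} (hp : p ≠ 0) (z : ℂ) (k : ℤ) :
    p ^ (z + k) = p ^ z * p ^ k := by
  rw [Complex.cpow_add _ _ hp, Complex.cpow_intCast]

theorem localizedVermaCoeff_eq {p : ℂ} (hp : p ≠ 0) (L : ℂ) (m : ℤ) :
    localizedVermaCoeff p L m =
      (p ^ m - (p ^ m)⁻¹) * (p ^ L * p * (p ^ m)⁻¹ - (p ^ L)⁻¹ * p⁻¹ * p ^ m) /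
        (p - p⁻¹) ^ 2 := by
  have h₁ : L - m + 1 = L + ((1 - m : ℤ) : ℂ) := by push_cast; ring
  have h₂ : -L + m - 1 = -L + ((m - 1 : ℤ) : ℂ) := by push_cast; ring
  rw [localizedVermaCoeff, symQNumZ, h₁, h₂, Complex.cpow_add_intCast hp,
    Complex.cpow_add_intCast hp, Complex.cpow_neg, zpow_sub₀ hp, zpow_sub₀ hp, zpow_neg,
    zpow_one]
  generalize p - p⁻¹ = δ
  ring

theorem localizedVermaCoeff_zero (p L : ℂ) : localizedVermaCoeff p L 0 = 0 := by
  simp [localizedVermaCoeff, symQNumZ]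

theorem localizedVermaCoeff_add_one {p : ℂ} (hp : p - p⁻¹ ≠ 0) (L : ℂ) (m : ℤ) :
    localizedVermaCoeff p L (m + 1) = localizedVermaCoeff p L m +
      (p - p⁻¹)⁻¹ * (p ^ (-2 * m) * p ^ L - p ^ (2 * m) * (p ^ L)⁻¹) := by
  have hp0 : p ≠ 0 := by rintro rfl; simp at hp
  have hL : p ^ L ≠ 0 := by simp [Complex.cpow_eq_zero_iff, hp0]
  have hm : p ^ m ≠ 0 := zpow_ne_zero m hp0
  rw [localizedVermaCoeff_eq hp0, localizedVermaCoeff_eq hp0, zpow_add_one₀ hp0, neg_mul,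
    zpow_neg, zpow_mul']
  field_simp
  ring

theorem apply_units_zpow_eq_localizedVermaCoeff_smul {M : Type*} [AddCommGroup M]
    [Module ℂ M] {p L : ℂ} (hp : p - p⁻¹ ≠ 0) {E K K' : Module.End ℂ M}
    {u : (Module.End ℂ M)ˣ}
    (hKu : K * u = p ^ (-2 : ℤ) • (u * K)) (hK'u : K' * u = p ^ (2 : ℤ) • (u * K'))
    (hEu : E * u - u * E = (p - p⁻¹)⁻¹ • (K - K')) {v : M} (hEv : E v = 0)
    (hKv : K v = p ^ L • v) (hK'v : K' v = p ^ (-L) • v) (m : ℤ) :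
    E (((u ^ m : (Module.End ℂ M)ˣ) : Module.End ℂ M) v) =
      localizedVermaCoeff p L m •
        ((u ^ (m - 1) : (Module.End ℂ M)ˣ) : Module.End ℂ M) v := by
  have hp0 : p ≠ 0 := by rintro rfl; simp at hp
  set F : ℤ → M := fun m => ((u ^ m : (Module.End ℂ M)ˣ) : Module.End ℂ M) v
  have hF : ∀ m, F (m + 1) = (u : Module.End ℂ M) (F m) :=
    fun m => Module.End.units_zpow_add_one_apply u m v
  have hU := Module.End.units_injective u
  have hK : ∀ m, K (F m) = (p ^ (-2 * m) * p ^ L) • F m := fun m => by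
    rw [zpow_mul]
    exact orbit_apply_eq_smul_of_mul_eq_smul_mul hU hF (zpow_ne_zero _ hp0) hKu (by simpa [F]) m
  have hK' : ∀ m, K' (F m) = (p ^ (2 * m) * (p ^ L)⁻¹) • F m := fun m => by
    rw [zpow_mul, ← Complex.cpow_neg]
    exact orbit_apply_eq_smul_of_mul_eq_smul_mul hU hF (zpow_ne_zero _ hp0) hK'u (by simpa [F]) m
  refine orbit_apply_eq_smul_of_step hU hF (fun m => ?_) (localizedVermaCoeff_add_one hp L)
    (by simp [F, hEv, localizedVermaCoeff_zero]) m
  rw [hF, ← Module.End.mul_apply, ← sub_add_cancel (E * u) (u * E), hEu, LinearMap.add_apply,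
    LinearMap.smul_apply, LinearMap.sub_apply, hK, hK', ← sub_smul, smul_smul, add_comm]
  rfl

theorem action_on_localized_verma_general
    (n : ℕ) (d : Fin n → ℤ)
    (q : ℂ)
    (M : Type*) [AddCommGroup M] [Module ℂ M]
    (i : Fin n) (lam : Fin n → ℂ)
    -- operators: `E j`, the invertible action `u` of `F_i`, and `K_i^{±1}`
    (E : Fin n → Module.End ℂ M) (u : (Module.End ℂ M)ˣ)
    (Ki Ki' : Module.End ℂ M)
    -- `K_i F_i = q_i^{-a_{ii}} F_i K_i = q_i^{-2} F_i K_i`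
    (hKF : Ki * (u : Module.End ℂ M) = ((q ^ d i) ^ (-2 : ℤ)) • ((u : Module.End ℂ M) * Ki))
    (hK'F : Ki' * (u : Module.End ℂ M) = ((q ^ d i) ^ (2 : ℤ)) • ((u : Module.End ℂ M) * Ki'))
    -- `[E_j, F_i] = δ_{ij} (K_i - K_i^{-1})/(q_i - q_i^{-1})`
    (hEF : ∀ j, E j * (u : Module.End ℂ M) - (u : Module.End ℂ M) * E j =
      if j = i then ((q ^ d i - (q ^ d i)⁻¹)⁻¹) • (Ki - Ki') else 0)
    -- the vacuum vector
    (v : M)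
    (hEv : ∀ j, E j v = 0)
    (hKv : Ki v = ((q ^ d i) ^ lam i) • v)
    (hK'v : Ki' v = ((q ^ d i) ^ (-lam i)) • v) :
    ∀ (j : Fin n) (m : ℤ),
      E j (((u ^ m : (Module.End ℂ M)ˣ) : Module.End ℂ M) v) =
        (if j = i then
          symQNumZ (q ^ d i) m *
            ((q ^ d i) ^ (lam i - m + 1) - (q ^ d i) ^ (-lam i + m - 1)) /
              (q ^ d i - (q ^ d i)⁻¹)
        else 0) • (((u ^ (m - 1) : (Module.End ℂ M)ˣ) : Module.End ℂ M) v) := by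
  intro j m
  rcases eq_or_ne j i with rfl | hji
  swap
  · rw [if_neg hji, zero_smul]
    exact Module.End.apply_units_zpow_apply_eq_zero_of_commute
      (sub_eq_zero.mp (by rw [hEF, if_neg hji])) (hEv j) m
  rw [if_pos rfl]
  -- if `q_i = q_i⁻¹`, the junk value `0⁻¹ = 0` makes `E_i` commute with `F_i`
  -- and the coefficient vanish
  by_cases hδ : q ^ d j - (q ^ d j)⁻¹ = 0
  · rw [hδ, div_zero, zero_smul]
    exact Module.End.apply_units_zpow_apply_eq_zero_of_commute
      (sub_eq_zero.mp (by rw [hEF, if_pos rfl, hδ, inv_zero, zero_smul])) (hEv j) m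
  have hEu := hEF j
  rw [if_pos rfl] at hEu
  exact apply_units_zpow_eq_localizedVermaCoeff_smul hδ hKF hK'F hEu (hEv j) hKv hK'v m

/-- the action of `E_j` on `F_i^m v_λ` (for all `m ∈ ℤ`) in the extended
Verma module `U_q⁻[F_i⁻¹]v_λ` over the quantum group of a symmetrizable Kac–Moody algebra:
`E_j F_i^m v_λ = δ_{ij} {m} ((q_i^{λ_i-m+1} - q_i^{-λ_i+m-1})/(q_i - q_i^{-1})) F_i^{m-1} v_λ`. -/
theorem action_on_localized_verma
    (n : ℕ) (a : Fin n → Fin n → ℤ) (d : Fin n → ℤ)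
    (hsymmetrizable : ∀ i j, d i * a i j = d j * a j i)
    (hdpos : ∀ i, 0 < d i) (hdiag : ∀ i, a i i = 2)
    (q : ℂ) (hq : q ≠ 0) (hq_not_root : ∀ k : ℕ, 0 < k → q ^ k ≠ 1)
    (M : Type*) [AddCommGroup M] [Module ℂ M]
    (i : Fin n) (lam : Fin n → ℂ)
    -- operators: `E j`, the invertible action `u` of `F_i`, and `K_i^{±1}`
    (E : Fin n → Module.End ℂ M) (u : (Module.End ℂ M)ˣ)
    (Ki Ki' : Module.End ℂ M)
    (hKKi : Ki * Ki' = 1) (hKiK : Ki' * Ki = 1)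
    -- `K_i F_i = q_i^{-a_{ii}} F_i K_i = q_i^{-2} F_i K_i`
    (hKF : Ki * (u : Module.End ℂ M) = ((q ^ d i) ^ (-2 : ℤ)) • ((u : Module.End ℂ M) * Ki))
    (hK'F : Ki' * (u : Module.End ℂ M) = ((q ^ d i) ^ (2 : ℤ)) • ((u : Module.End ℂ M) * Ki'))
    -- `[E_j, F_i] = δ_{ij} (K_i - K_i^{-1})/(q_i - q_i^{-1})`
    (hEF : ∀ j, E j * (u : Module.End ℂ M) - (u : Module.End ℂ M) * E j =
      if j = i then ((q ^ d i - (q ^ d i)⁻¹)⁻¹) • (Ki - Ki') else 0)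
    -- the vacuum vector
    (v : M) (hv : v ≠ 0)
    (hEv : ∀ j, E j v = 0)
    (hKv : Ki v = ((q ^ d i) ^ lam i) • v)
    (hK'v : Ki' v = ((q ^ d i) ^ (-lam i)) • v) :
    ∀ (j : Fin n) (m : ℤ),
      E j (((u ^ m : (Module.End ℂ M)ˣ) : Module.End ℂ M) v) =
        (if j = i then
          symQNumZ (q ^ d i) m *
            ((q ^ d i) ^ (lam i - m + 1) - (q ^ d i) ^ (-lam i + m - 1)) /
              (q ^ d i - (q ^ d i)⁻¹)
        else 0) • (((u ^ (m - 1) : (Module.End ℂ M)ˣ) : Module.End ℂ M) v) :=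
  action_on_localized_verma_general n d q M i lam E u Ki Ki' hKF hK'F hEF v hEv hKv hK'v
end

section
/- In U_q^−(g) for a symmetrizable Kac-Moody algebra (q not a root of unity), for every Chevalley generator F_i and every element b ∈ U_q^−(g), there exists N_0 such that for all N ≥ N_0, F_i^N b ∈ U_q^−(g)·F_i (i.e., F_i^N b lies in the left ideal generated by F_i). -/
noncomputable section
open FreeAlgebra

/-- The q-number `[m]_d = (1 - q^{2md})/(1 - q^{2d})`. -/
def qNum (q : ℂ) (d : ℤ) (m : ℤ) : ℂ := (1 - q ^ (2 * m * d)) / (1 - q ^ (2 * d))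

/-- The q-factorial `[j]_d!`. -/
def qFact (q : ℂ) (d : ℤ) : ℕ → ℂ
  | 0 => 1
  | (j + 1) => qNum q d (j + 1) * qFact q d j

/-- The Gaussian binomial coefficient `qbinom(n, ν; d)`. -/
def qBinom (q : ℂ) (d : ℤ) (n : ℤ) (ν : ℕ) : ℂ :=
  (∏ s ∈ Finset.range ν, qNum q d (n - s)) / qFact q d ν

/-- The quantum Serre relations defining `U_q⁻(g)` for a symmetrizable generalized Cartan
matrix `a` symmetrized by `d`. -/
inductive SerreRelG (n : ℕ) (a : Fin n → Fin n → ℤ) (d : Fin n → ℤ) (q : ℂ) :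
    FreeAlgebra ℂ (Fin n) → FreeAlgebra ℂ (Fin n) → Prop
  | serre (i j : Fin n) (h : i ≠ j) : SerreRelG n a d q
      (∑ ν ∈ Finset.range ((1 - a i j).toNat + 1),
        ((-1 : ℂ) ^ ν * (q ^ d i) ^ ((ν : ℤ) * ((ν : ℤ) - 1 + a i j)) *
            qBinom q (d i) (1 - a i j) ν) •
          (ι ℂ i ^ ((1 - a i j).toNat - ν) * ι ℂ j * ι ℂ i ^ ν)) 0

/-- `U_q⁻(g)`. -/
abbrev UqMinusG (n : ℕ) (a : Fin n → Fin n → ℤ) (d : Fin n → ℤ) (q : ℂ) :=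
  RingQuot (SerreRelG n a d q)

def fgenG (n : ℕ) (a : Fin n → Fin n → ℤ) (d : Fin n → ℤ) (q : ℂ) (i : Fin n) :
    UqMinusG n a d q :=
  RingQuot.mkAlgHom ℂ (SerreRelG n a d q) (ι ℂ i)

/-! For `j ≠ i` the Serre relation has coefficient `1` at `ν = 0`, so it rewrites
`F_i^m F_j` (`m = 1 - a_ij`) as a combination of words `F_i^(m-ν) F_j F_i^ν` with `ν > 0`.
Pushing powers of `F_i` to the right in this way shows `F_i^s F_j F_i^t ∈ U F_i^(s+t+1-m)`.
Hence the elements `b` such that `F_i^N b` lies in every left ideal `U F_i^K` for large `N`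
form a subalgebra; it contains every generator, so it is all of `U_q⁻(g)`. -/

open Filter Submodule

section PowAbsorbing

variable {R A : Type*} [CommSemiring R] [Ring A] [Algebra R A]

lemma pow_mem_span_pow (u : A) {k t : ℕ} (h : k ≤ t) : u ^ t ∈ span A {u ^ k} :=
  mem_span_singleton.mpr ⟨u ^ (t - k), by rw [smul_eq_mul, ← pow_add, Nat.sub_add_cancel h]⟩

lemma span_pow_le_span_pow (u : A) {k t : ℕ} (h : k ≤ t) : span A {u ^ t} ≤ span A {u ^ k} :=
  span_le.mpr (Set.singleton_subset_iff.mpr (pow_mem_span_pow u h))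

lemma pow_mul_mul_pow_mem_span_pow_of_relation (u v : A) (c : ℕ → R) (m : ℕ)
    (hrel : ∑ ν ∈ Finset.range (m + 1), c ν • (u ^ (m - ν) * v * u ^ ν) = 0) (hc : c 0 = 1)
    (s t k : ℕ) (hk : k + m ≤ s + t + 1) :
    u ^ s * v * u ^ t ∈ span A {u ^ k} := by
  induction s using Nat.strong_induction_on generalizing t with
  | _ s ih =>
    by_cases hs : s < m
    · exact span_pow_le_span_pow u (by omega : k ≤ t) (mem_span_singleton.mpr ⟨u ^ s * v, rfl⟩)
    have hlead : u ^ m * v =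
        -∑ ν ∈ Finset.range m, c (ν + 1) • (u ^ (m - (ν + 1)) * v * u ^ (ν + 1)) := by
      rw [Finset.sum_range_succ', hc, one_smul, Nat.sub_zero, pow_zero, mul_one] at hrel
      exact eq_neg_of_add_eq_zero_right hrel
    have hsplit : u ^ s * v * u ^ t = u ^ (s - m) * (u ^ m * v) * u ^ t := by
      rw [← pow_sub_mul_pow u (not_lt.mp hs)]
      simp only [mul_assoc]
    rw [hsplit, hlead, mul_neg, neg_mul, Finset.mul_sum, Finset.sum_mul]
    refine neg_mem (sum_mem fun ν hν => ?_)
    have hν : ν < m := Finset.mem_range.mp hν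
    have hword : u ^ (s - m) * (u ^ (m - (ν + 1)) * v * u ^ (ν + 1)) * u ^ t =
        u ^ (s - (ν + 1)) * v * u ^ (ν + 1 + t) := by
      rw [show s - (ν + 1) = s - m + (m - (ν + 1)) by omega, pow_add u (s - m), pow_add u ν.succ]
      simp only [mul_assoc]
    rw [mul_smul_comm, smul_mul_assoc, hword]
    exact smul_of_tower_mem _ _ (ih _ (by omega) _ (by omega))

variable (R) in
/-- Quantifying over every `K`, not only `K = 1`, makes this set closed under multiplication. -/
def powAbsorbing (u : A) : Subalgebra R A where
  carrier := {b | ∀ K, ∀ᶠ N in atTop, u ^ N * b ∈ span A {u ^ K}}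
  mul_mem' {x y} hx hy K := by
    obtain ⟨Ky, hKy⟩ := (hy K).exists
    filter_upwards [hx Ky] with N hN
    obtain ⟨c, hc⟩ := mem_span_singleton.mp hN
    rw [← mul_assoc, ← hc, smul_eq_mul, mul_assoc]
    exact smul_mem _ c hKy
  add_mem' hx hy K := by
    filter_upwards [hx K, hy K] with N hx hy
    rw [mul_add]
    exact add_mem hx hy
  algebraMap_mem' r K := by
    filter_upwards [eventually_ge_atTop K] with N hN
    rw [← Algebra.commutes, ← smul_eq_mul]
    exact smul_mem _ _ (pow_mem_span_pow u hN)

lemma self_mem_powAbsorbing (u : A) : u ∈ powAbsorbing R u := fun K => by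
  filter_upwards [eventually_ge_atTop K] with N hN
  exact pow_succ u N ▸ pow_mem_span_pow u (by omega : K ≤ N + 1)

lemma mem_powAbsorbing_of_relation {u v : A} {c : ℕ → R} {m : ℕ}
    (hrel : ∑ ν ∈ Finset.range (m + 1), c ν • (u ^ (m - ν) * v * u ^ ν) = 0) (hc : c 0 = 1) :
    v ∈ powAbsorbing R u := fun K => by
  filter_upwards [eventually_ge_atTop (K + m)] with N hN
  simpa using pow_mul_mul_pow_mem_span_pow_of_relation u v c m hrel hc N 0 K (by omega)

end PowAbsorbing

section UqMinus

variable (n : ℕ) (a : Fin n → Fin n → ℤ) (d : Fin n → ℤ) (q : ℂ)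

lemma fgenG_serre (i j : Fin n) (h : i ≠ j) :
    ∑ ν ∈ Finset.range ((1 - a i j).toNat + 1),
      ((-1 : ℂ) ^ ν * (q ^ d i) ^ ((ν : ℤ) * ((ν : ℤ) - 1 + a i j)) *
          qBinom q (d i) (1 - a i j) ν) •
        (fgenG n a d q i ^ ((1 - a i j).toNat - ν) * fgenG n a d q j * fgenG n a d q i ^ ν) =
      0 := by
  simpa [fgenG, map_sum, map_smul, map_mul, map_pow] using
    RingQuot.mkAlgHom_rel ℂ (SerreRelG.serre (a := a) (d := d) (q := q) i j h)

lemma adjoin_range_fgenG : Algebra.adjoin ℂ (Set.range (fgenG n a d q)) = ⊤ := by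
  rw [show fgenG n a d q = RingQuot.mkAlgHom ℂ (SerreRelG n a d q) ∘ ι ℂ from rfl,
    Set.range_comp, ← AlgHom.map_adjoin, FreeAlgebra.adjoin_range_ι, Algebra.map_top,
    AlgHom.range_eq_top]
  exact RingQuot.mkAlgHom_surjective ℂ (SerreRelG n a d q)

end UqMinus

theorem high_power_in_left_ideal_general
    (n : ℕ) (a : Fin n → Fin n → ℤ) (d : Fin n → ℤ)
    (q : ℂ)
    (i : Fin n) (b : UqMinusG n a d q) :
    ∃ N₀ : ℕ, ∀ N : ℕ, N₀ ≤ N →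
      fgenG n a d q i ^ N * b ∈
        Submodule.span (UqMinusG n a d q) {fgenG n a d q i} := by
  have hgen : ∀ j, fgenG n a d q j ∈ powAbsorbing ℂ (fgenG n a d q i) := by
    intro j
    rcases eq_or_ne j i with rfl | hji
    · exact self_mem_powAbsorbing _
    · exact mem_powAbsorbing_of_relation (fgenG_serre n a d q i j hji.symm)
        (by simp [qBinom, qFact])
  have hb : b ∈ powAbsorbing ℂ (fgenG n a d q i) := by
    have hle := Algebra.adjoin_le (Set.range_subset_iff.mpr hgen)
    rw [adjoin_range_fgenG] at hle
    exact hle trivial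
  obtain ⟨N₀, hN₀⟩ := eventually_atTop.mp (hb 1)
  exact ⟨N₀, fun N hN => by simpa using hN₀ N hN⟩

/-- for every generator `F_i` and every `b ∈ U_q⁻(g)` there is `N₀` such that
for all `N ≥ N₀`, `F_i^N b` lies in the left ideal `U_q⁻(g)·F_i`. -/
theorem high_power_in_left_ideal
    (n : ℕ) (a : Fin n → Fin n → ℤ) (d : Fin n → ℤ)
    (hsym : ∀ i j, d i * a i j = d j * a j i) (hdpos : ∀ i, 0 < d i)
    (hdiag : ∀ i, a i i = 2) (hoff : ∀ i j, i ≠ j → a i j ≤ 0)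
    (q : ℂ) (hq : q ≠ 0) (hq_not_root : ∀ k : ℕ, 0 < k → q ^ k ≠ 1)
    (i : Fin n) (b : UqMinusG n a d q) :
    ∃ N₀ : ℕ, ∀ N : ℕ, N₀ ≤ N →
      fgenG n a d q i ^ N * b ∈
        Submodule.span (UqMinusG n a d q) {fgenG n a d q i} :=
  high_power_in_left_ideal_general n a d q i b

end
end
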